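/- arXiv:2307.03962 — 2 statements merged into one kernel-verified Lean document; each statement's English description precedes it below -/
import Mathlib

section
/- Fix v > 1 and define E(k₁,k₂;v) = (1/2) ln((v−k₁)(v−k₂)/(k₁k₂)) for 1 ≤ k₁ < k₂ ≤ v−1, with E(0,1;v) = ∞. Let g(k) = (k e^ε + v − k)² / (k(v−k)). Then for 1 ≤ k ≤ v−1, k minimizes g over {1,...,v−1} if and only if E(k,k+1;v) ≤ ε ≤ E(k−1,k;v). -/
/-- Adjacent comparison, upward: g x ≤ g y (y = x+1) iff (v-x)(v-y) ≤ t² x y. -/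
private lemma adj_le (v t x y : ℝ) (hv : 0 < v) (hx : 0 < x) (hy : y = x + 1)
    (hyv : y < v) :
    (x * t + v - x) ^ 2 / (x * (v - x)) ≤ (y * t + v - y) ^ 2 / (y * (v - y)) ↔
      (v - x) * (v - y) ≤ t ^ 2 * (x * y) := by
  subst hy
  have h1 : 0 < x * (v - x) := by nlinarith
  have h2 : 0 < (x + 1) * (v - (x + 1)) := by nlinarith
  rw [div_le_div_iff₀ h1 h2]
  constructor
  · intro h; nlinarith [h, hv]
  · intro h; nlinarith [h, hv]

/-- Adjacent comparison, downward: g y ≤ g x (y = x+1) iff t² x y ≤ (v-x)(v-y). -/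
private lemma adj_ge (v t x y : ℝ) (hv : 0 < v) (hx : 0 < x) (hy : y = x + 1)
    (hyv : y < v) :
    (y * t + v - y) ^ 2 / (y * (v - y)) ≤ (x * t + v - x) ^ 2 / (x * (v - x)) ↔
      t ^ 2 * (x * y) ≤ (v - x) * (v - y) := by
  subst hy
  have h1 : 0 < x * (v - x) := by nlinarith
  have h2 : 0 < (x + 1) * (v - (x + 1)) := by nlinarith
  rw [div_le_div_iff₀ h2 h1]
  constructor
  · intro h; nlinarith [h, hv]
  · intro h; nlinarith [h, hv]

private lemma up_chain (v : ℕ) (t : ℝ) (ht : 1 < t) (k : ℕ) (hk1 : 1 ≤ k)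
    (hC : ((v:ℝ) - k) * ((v:ℝ) - k - 1) ≤ t ^ 2 * ((k:ℝ) * ((k:ℝ) + 1))) :
    ∀ j, k ≤ j → j + 1 ≤ v →
      ((k:ℝ) * t + v - k) ^ 2 / ((k:ℝ) * ((v:ℝ) - k))
        ≤ ((j:ℝ) * t + v - j) ^ 2 / ((j:ℝ) * ((v:ℝ) - j)) ∧
      ((v:ℝ) - j) * ((v:ℝ) - j - 1) ≤ t ^ 2 * ((j:ℝ) * ((j:ℝ) + 1)) := by
  intro j hj
  induction j, hj using Nat.le_induction with
  | base => intro _; exact ⟨le_refl _, hC⟩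
  | succ j hkj ih =>
    intro hle
    have hjv : j + 1 ≤ v := by omega
    obtain ⟨ih1, ih2⟩ := ih hjv
    have hj1 : (1:ℝ) ≤ (j:ℝ) := by exact_mod_cast le_trans hk1 hkj
    have hjv' : (j:ℝ) + 1 + 1 ≤ (v:ℝ) := by exact_mod_cast hle
    have hv0 : (0:ℝ) < (v:ℝ) := by linarith
    have hstep : ((j:ℝ) * t + v - j) ^ 2 / ((j:ℝ) * ((v:ℝ) - j))
        ≤ (((j:ℝ) + 1) * t + v - ((j:ℝ) + 1)) ^ 2
          / (((j:ℝ) + 1) * ((v:ℝ) - ((j:ℝ) + 1))) := by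
      rw [adj_le (v:ℝ) t (j:ℝ) ((j:ℝ) + 1) hv0 (by linarith) rfl (by linarith)]
      nlinarith [ih2]
    constructor
    · push_cast
      exact le_trans ih1 hstep
    · push_cast
      nlinarith [ih2, sq_nonneg t, hj1, hjv', ht]

private lemma down_chain (v : ℕ) (t : ℝ) (ht : 1 < t) (k : ℕ) (hk2 : k + 1 ≤ v)
    (hD : t ^ 2 * (((k:ℝ) - 1) * k) ≤ ((v:ℝ) - ((k:ℝ) - 1)) * ((v:ℝ) - k)) :
    ∀ d j, j + d = k → 1 ≤ j →
      ((k:ℝ) * t + v - k) ^ 2 / ((k:ℝ) * ((v:ℝ) - k))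
        ≤ ((j:ℝ) * t + v - j) ^ 2 / ((j:ℝ) * ((v:ℝ) - j)) ∧
      t ^ 2 * (((j:ℝ) - 1) * j) ≤ ((v:ℝ) - ((j:ℝ) - 1)) * ((v:ℝ) - j) := by
  intro d
  induction d with
  | zero =>
    intro j hj _
    have : j = k := by omega
    subst this
    exact ⟨le_refl _, hD⟩
  | succ d ih =>
    intro j hj hj1
    obtain ⟨ih1, ih2⟩ := ih (j + 1) (by omega) (by omega)
    push_cast at ih2
    have hj1' : (1:ℝ) ≤ (j:ℝ) := by exact_mod_cast hj1
    have hjv : (j:ℝ) + 1 + 1 ≤ (v:ℝ) := by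
      have : j + 1 + 1 ≤ v := by omega
      exact_mod_cast this
    have hv0 : (0:ℝ) < (v:ℝ) := by linarith
    have hstep : (((j:ℝ) + 1) * t + v - ((j:ℝ) + 1)) ^ 2
          / (((j:ℝ) + 1) * ((v:ℝ) - ((j:ℝ) + 1)))
        ≤ ((j:ℝ) * t + v - j) ^ 2 / ((j:ℝ) * ((v:ℝ) - j)) := by
      rw [adj_ge (v:ℝ) t (j:ℝ) ((j:ℝ) + 1) hv0 (by linarith) rfl (by linarith)]
      nlinarith [ih2]
    constructor
    · refine le_trans ?_ hstep
      have : (((j:ℝ) + 1) * t + v - ((j:ℝ) + 1)) ^ 2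
          / (((j:ℝ) + 1) * ((v:ℝ) - ((j:ℝ) + 1)))
          = ((((j+1):ℕ):ℝ) * t + v - ((j+1):ℕ)) ^ 2
            / ((((j+1):ℕ):ℝ) * ((v:ℝ) - ((j+1):ℕ))) := by push_cast; ring_nf
      rw [this]
      exact ih1
    · nlinarith [ih2, sq_nonneg t, hj1', hjv, ht]

set_option maxHeartbeats 1000000 in
/-- For 1 ≤ k ≤ v−1, k minimizes g(k) = (k e^ε + v − k)²/(k(v−k)) over {1,…,v−1}
iff E(k,k+1;v) ≤ ε ≤ E(k−1,k;v), where E(k₁,k₂;v) = (1/2)ln((v−k₁)(v−k₂)/(k₁k₂))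
and E(0,1;v) = ∞ (encoded by the disjunct k = 1). -/
theorem stmt_13 (v : ℕ) (hv : 2 ≤ v) (ε : ℝ) (hε : 0 < ε)
    (k : ℕ) (hk : k ∈ Finset.Icc 1 (v - 1)) :
    (∀ j ∈ Finset.Icc 1 (v - 1),
      ((k : ℝ) * Real.exp ε + v - k) ^ 2 / ((k : ℝ) * ((v : ℝ) - k))
        ≤ ((j : ℝ) * Real.exp ε + v - j) ^ 2 / ((j : ℝ) * ((v : ℝ) - j)))
    ↔ ((1 / 2 : ℝ) * Real.log
          ((((v : ℝ) - k) * ((v : ℝ) - (k + 1))) / ((k : ℝ) * ((k : ℝ) + 1))) ≤ ε ∧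
        (k = 1 ∨ ε ≤ (1 / 2 : ℝ) * Real.log
          ((((v : ℝ) - ((k : ℝ) - 1)) * ((v : ℝ) - k)) / ((((k : ℝ) - 1)) * k)))) := by
  rw [Finset.mem_Icc] at hk
  obtain ⟨hk1, hk2⟩ := hk
  have hkv : k + 1 ≤ v := by omega
  set t := Real.exp ε with htdef
  have ht : 1 < t := by
    have h1 := Real.add_one_le_exp ε
    rw [htdef]; linarith
  have hexp2 : Real.exp (2 * ε) = t ^ 2 := by
    rw [two_mul, Real.exp_add, sq]
  have hK1 : (1:ℝ) ≤ (k:ℝ) := by exact_mod_cast hk1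
  have hKv : (k:ℝ) + 1 ≤ (v:ℝ) := by exact_mod_cast hkv
  have hvR : (2:ℝ) ≤ (v:ℝ) := by exact_mod_cast hv
  have hv0 : (0:ℝ) < (v:ℝ) := by linarith
  have ht2 : (0:ℝ) < t ^ 2 := by positivity
  set C : Prop := ((v:ℝ) - k) * ((v:ℝ) - k - 1) ≤ t ^ 2 * ((k:ℝ) * ((k:ℝ) + 1)) with hCdef
  set D : Prop := t ^ 2 * (((k:ℝ) - 1) * k) ≤ ((v:ℝ) - ((k:ℝ) - 1)) * ((v:ℝ) - k) with hDdef
  have hmain : (∀ j ∈ Finset.Icc 1 (v - 1),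
      ((k : ℝ) * t + v - k) ^ 2 / ((k : ℝ) * ((v : ℝ) - k))
        ≤ ((j : ℝ) * t + v - j) ^ 2 / ((j : ℝ) * ((v : ℝ) - j))) ↔ (C ∧ D) := by
    constructor
    · intro hmin
      constructor
      · -- C
        by_cases h : k + 1 + 1 ≤ v
        · have hm := hmin (k + 1) (Finset.mem_Icc.mpr ⟨by omega, by omega⟩)
          push_cast at hm
          have hres := (adj_le (v:ℝ) t (k:ℝ) ((k:ℝ) + 1) hv0 (by linarith) rfl
            (by exact_mod_cast h)).mp hm
          rw [hCdef]
          nlinarith [hres]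
        · have hkeq : (k:ℝ) = (v:ℝ) - 1 := by
            have h2 : k + 1 = v := by omega
            have h3 : ((k:ℕ):ℝ) + 1 = (v:ℝ) := by exact_mod_cast h2
            linarith
          rw [hCdef, hkeq]
          have hnn : (0:ℝ) ≤ t ^ 2 * (((v:ℝ) - 1) * ((v:ℝ) - 1 + 1)) := mul_nonneg (sq_nonneg t) (mul_nonneg (by linarith) (by linarith))
          nlinarith [hnn]
      · -- D
        by_cases h : k = 1
        · rw [hDdef]
          subst h
          push_cast
          nlinarith [hvR]
        · have hk2' : 2 ≤ k := by omega
          have hK2 : (2:ℝ) ≤ (k:ℝ) := by exact_mod_cast hk2'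
          have hm := hmin (k - 1) (Finset.mem_Icc.mpr ⟨by omega, by omega⟩)
          have hcast : ((k - 1 : ℕ) : ℝ) = (k:ℝ) - 1 := by
            push_cast [Nat.cast_sub hk1]; ring
          rw [hcast] at hm
          have hres := (adj_ge (v:ℝ) t ((k:ℝ) - 1) (k:ℝ) hv0 (by linarith)
            (by ring) (by linarith)).mp hm
          rw [hDdef]
          nlinarith [hres]
    · rintro ⟨hC, hD⟩ j hj
      rw [Finset.mem_Icc] at hj
      obtain ⟨hj1, hj2⟩ := hj
      rcases le_total k j with hkj | hjk
      · exact (up_chain v t ht k hk1 hC j hkj (by omega)).1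
      · exact (down_chain v t ht k hkv hD (k - j) j (by omega) hj1).1
  rw [hmain]
  have hiff1 : C ↔ (1 / 2 : ℝ) * Real.log
      ((((v : ℝ) - k) * ((v : ℝ) - ((k:ℝ) + 1))) / ((k : ℝ) * ((k : ℝ) + 1))) ≤ ε := by
    by_cases h : k + 1 + 1 ≤ v
    · have hden : (0:ℝ) < (k:ℝ) * ((k:ℝ) + 1) := by nlinarith
      have hKv2 : (k:ℝ) + 1 + 1 ≤ (v:ℝ) := by exact_mod_cast h
      have hnum : (0:ℝ) < ((v:ℝ) - k) * ((v:ℝ) - ((k:ℝ) + 1)) := by nlinarith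
      have hx : (0:ℝ) < (((v:ℝ) - k) * ((v:ℝ) - ((k:ℝ) + 1))) / ((k:ℝ) * ((k:ℝ) + 1)) :=
        div_pos hnum hden
      rw [hCdef]
      constructor
      · intro hC
        have h1 : (((v:ℝ) - k) * ((v:ℝ) - ((k:ℝ) + 1))) / ((k:ℝ) * ((k:ℝ) + 1)) ≤ t ^ 2 := by
          rw [div_le_iff₀ hden]; nlinarith [hC]
        have h2 := (Real.log_le_iff_le_exp hx).mpr (by rw [hexp2]; exact h1)
        linarith
      · intro hlog
        have h2 : (((v:ℝ) - k) * ((v:ℝ) - ((k:ℝ) + 1))) / ((k:ℝ) * ((k:ℝ) + 1))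
            ≤ Real.exp (2 * ε) := (Real.log_le_iff_le_exp hx).mp (by linarith)
        rw [hexp2, div_le_iff₀ hden] at h2
        nlinarith [h2]
    · have hkeq : (k:ℝ) = (v:ℝ) - 1 := by
        have h2 : k + 1 = v := by omega
        have h3 : ((k:ℕ):ℝ) + 1 = (v:ℝ) := by exact_mod_cast h2
        linarith
      have hzero : (((v : ℝ) - k) * ((v : ℝ) - ((k:ℝ) + 1))) / ((k : ℝ) * ((k : ℝ) + 1))
          = 0 := by
        have : (v : ℝ) - ((k:ℝ) + 1) = 0 := by rw [hkeq]; ring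
        rw [this, mul_zero, zero_div]
      constructor
      · intro _
        rw [hzero, Real.log_zero, mul_zero]
        linarith
      · intro _
        rw [hCdef, hkeq]
        have hnn : (0:ℝ) ≤ t ^ 2 * (((v:ℝ) - 1) * ((v:ℝ) - 1 + 1)) := mul_nonneg (sq_nonneg t) (mul_nonneg (by linarith) (by linarith))
        nlinarith [hnn]
  have hiff2 : D ↔ (k = 1 ∨ ε ≤ (1 / 2 : ℝ) * Real.log
      ((((v : ℝ) - ((k : ℝ) - 1)) * ((v : ℝ) - k)) / ((((k : ℝ) - 1)) * k))) := by
    by_cases h : k = 1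
    · constructor
      · intro _; exact Or.inl h
      · intro _
        rw [hDdef]
        subst h
        push_cast
        nlinarith [hvR]
    · have hk2' : 2 ≤ k := by omega
      have hK2 : (2:ℝ) ≤ (k:ℝ) := by exact_mod_cast hk2'
      have hden : (0:ℝ) < ((k:ℝ) - 1) * (k:ℝ) := by nlinarith
      have hnum : (0:ℝ) < ((v:ℝ) - ((k:ℝ) - 1)) * ((v:ℝ) - k) := by nlinarith
      have hx : (0:ℝ) < (((v:ℝ) - ((k:ℝ) - 1)) * ((v:ℝ) - k)) / (((k:ℝ) - 1) * k) :=
        div_pos hnum hden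
      rw [hDdef]
      constructor
      · intro hD
        refine Or.inr ?_
        have h1 : t ^ 2 ≤ (((v:ℝ) - ((k:ℝ) - 1)) * ((v:ℝ) - k)) / (((k:ℝ) - 1) * k) := by
          rw [le_div_iff₀ hden]; nlinarith [hD]
        have h2 := (Real.le_log_iff_exp_le hx).mpr (by rw [hexp2]; exact h1)
        linarith
      · rintro (hk1' | hlog)
        · exact absurd hk1' h
        · have h2 : Real.exp (2 * ε)
              ≤ (((v:ℝ) - ((k:ℝ) - 1)) * ((v:ℝ) - k)) / (((k:ℝ) - 1) * k) :=
            (Real.le_log_iff_exp_le hx).mp (by linarith)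
          rw [hexp2, le_div_iff₀ hden] at h2
          nlinarith [h2]
  rw [hiff1, hiff2]
end

section
/- For ε > 0 and integer v ≥ 2, the minimizer of g(k) = (k e^ε + v − k)²/(k(v−k)) over k ∈ {1,...,v−1} lies in {⌊v/(e^ε+1)⌋, ⌈v/(e^ε+1)⌉} (with the convention that if ⌊v/(e^ε+1)⌋ = 0 the minimizer is 1). -/
lemma g_incr (a v x y : ℝ) (ha : 1 < a) (hx : 0 < x) (hxy : x ≤ y) (hyv : y < v)
    (hs : v / (a + 1) ≤ x) :
    (x * a + v - x) ^ 2 / (x * (v - x)) ≤ (y * a + v - y) ^ 2 / (y * (v - y)) := by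
  have ha0 : (0:ℝ) < a + 1 := by linarith
  have h1 : v ≤ x * (a + 1) := by rwa [div_le_iff₀ ha0] at hs
  have hy : 0 < y := lt_of_lt_of_le hx hxy
  have hv : 0 < v := lt_trans hy hyv
  have hxv : x < v := lt_of_le_of_lt hxy hyv
  have h2 : v ≤ y * (a + 1) := le_trans h1 (by nlinarith)
  rw [div_le_div_iff₀ (mul_pos hx (by linarith)) (mul_pos hy (by linarith))]
  have H1 : 0 ≤ (v * ((a + 1) * (a - 1))) * ((y - x) * (y * (x * (a + 1) - v))) :=
    mul_nonneg (mul_nonneg hv.le (mul_nonneg ha0.le (by linarith)))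
      (mul_nonneg (by linarith) (mul_nonneg hy.le (by linarith)))
  have H2 : 0 ≤ (a * (v * v)) * ((y - x) * (y * (a + 1) - v)) :=
    mul_nonneg (mul_nonneg (by linarith) (mul_nonneg hv.le hv.le))
      (mul_nonneg (by linarith) (by linarith))
  have H3 : 0 ≤ (v * v) * ((y - x) * (x * (a + 1) - v)) :=
    mul_nonneg (mul_nonneg hv.le hv.le) (mul_nonneg (by linarith) (by linarith))
  nlinarith [H1, H2, H3, ha0]

lemma g_decr (a v x y : ℝ) (ha : 1 < a) (hx : 0 < x) (hxy : x ≤ y) (hyv : y < v)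
    (hs : y ≤ v / (a + 1)) :
    (y * a + v - y) ^ 2 / (y * (v - y)) ≤ (x * a + v - x) ^ 2 / (x * (v - x)) := by
  have ha0 : (0:ℝ) < a + 1 := by linarith
  have h2 : y * (a + 1) ≤ v := by rwa [le_div_iff₀ ha0] at hs
  have hy : 0 < y := lt_of_lt_of_le hx hxy
  have hv : 0 < v := lt_trans hy hyv
  have hxv : x < v := lt_of_le_of_lt hxy hyv
  have h1 : x * (a + 1) ≤ v := le_trans (by nlinarith) h2
  rw [div_le_div_iff₀ (mul_pos hy (by linarith)) (mul_pos hx (by linarith))]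
  have H1 : 0 ≤ (v * ((a + 1) * (a - 1))) * ((y - x) * (y * (v - x * (a + 1)))) :=
    mul_nonneg (mul_nonneg hv.le (mul_nonneg ha0.le (by linarith)))
      (mul_nonneg (by linarith) (mul_nonneg hy.le (by linarith)))
  have H2 : 0 ≤ (a * (v * v)) * ((y - x) * (v - y * (a + 1))) :=
    mul_nonneg (mul_nonneg (by linarith) (mul_nonneg hv.le hv.le))
      (mul_nonneg (by linarith) (by linarith))
  have H3 : 0 ≤ (v * v) * ((y - x) * (v - x * (a + 1))) :=
    mul_nonneg (mul_nonneg hv.le hv.le) (mul_nonneg (by linarith) (by linarith))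
  nlinarith [H1, H2, H3, ha0]

/-- The minimizer of g(k) = (k e^ε + v − k)²/(k(v−k)) over k ∈ {1,…,v−1} lies in
{⌊v/(e^ε+1)⌋, ⌈v/(e^ε+1)⌉} (with the convention that if the floor is 0 the
minimizer is 1). -/
theorem stmt_14 (v : ℕ) (hv : 2 ≤ v) (ε : ℝ) (hε : 0 < ε) :
    ∃ k ∈ Finset.Icc 1 (v - 1),
      (∀ j ∈ Finset.Icc 1 (v - 1),
        ((k : ℝ) * Real.exp ε + v - k) ^ 2 / ((k : ℝ) * ((v : ℝ) - k))
          ≤ ((j : ℝ) * Real.exp ε + v - j) ^ 2 / ((j : ℝ) * ((v : ℝ) - j))) ∧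
      (k = ⌊(v : ℝ) / (Real.exp ε + 1)⌋₊ ∨
       k = ⌈(v : ℝ) / (Real.exp ε + 1)⌉₊ ∨
       (⌊(v : ℝ) / (Real.exp ε + 1)⌋₊ = 0 ∧ k = 1)) := by
  set a := Real.exp ε with haa
  have ha : 1 < a := by
    rw [haa]
    have := Real.add_one_lt_exp (ne_of_gt hε)
    linarith
  have ha0 : (0:ℝ) < a + 1 := by linarith
  have hv2 : (2:ℝ) ≤ (v:ℝ) := by exact_mod_cast hv
  have hvpos : (0:ℝ) < v := by linarith
  set s : ℝ := (v:ℝ) / (a + 1) with hs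
  have hspos : 0 < s := div_pos hvpos ha0
  have hshalf : s < (v:ℝ) / 2 := by
    rw [hs, div_lt_div_iff₀ ha0 (by norm_num)]
    nlinarith
  -- cast of v - 1
  have hv1 : ((v - 1 : ℕ) : ℝ) = (v:ℝ) - 1 := by
    have : (1:ℕ) ≤ v := by omega
    push_cast [this]; ring
  have hjlt : ∀ j : ℕ, j ∈ Finset.Icc 1 (v - 1) → 1 ≤ j ∧ (j:ℝ) < v ∧ 0 < (j:ℝ) := by
    intro j hj
    rw [Finset.mem_Icc] at hj
    refine ⟨hj.1, ?_, ?_⟩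
    · have : j < v := by omega
      exact_mod_cast this
    · have : 0 < j := hj.1
      exact_mod_cast this
  by_cases hf0 : ⌊s⌋₊ = 0
  · -- floor is 0, minimizer is 1
    have hs1 : s < 1 := by
      have := Nat.floor_eq_zero.mp hf0
      exact this
    refine ⟨1, ?_, ?_, Or.inr (Or.inr ⟨hf0, rfl⟩)⟩
    · rw [Finset.mem_Icc]; omega
    · intro j hj
      obtain ⟨hj1, hjv, hjpos⟩ := hjlt j hj
      have hj1' : (1:ℝ) ≤ (j:ℝ) := by exact_mod_cast hj1
      have := g_incr a (v:ℝ) 1 (j:ℝ) ha one_pos hj1' hjv (le_of_lt hs1)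
      push_cast
      convert this using 2 <;> push_cast <;> ring
  · -- floor ≥ 1
    set f := ⌊s⌋₊ with hfd
    set c := ⌈s⌉₊ with hcd
    have hf1 : 1 ≤ f := by omega
    have hfs : (f:ℝ) ≤ s := Nat.floor_le hspos.le
    have hsc : s ≤ (c:ℝ) := Nat.le_ceil s
    have hfc : f ≤ c := Nat.floor_le_ceil s
    have hcf1 : c ≤ f + 1 := Nat.ceil_le_floor_add_one s
    have hcv : (c:ℝ) < v := by
      have h1 : (c:ℝ) ≤ (f:ℝ) + 1 := by exact_mod_cast hcf1
      have h2 : (f:ℝ) ≤ s := hfs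
      linarith [hshalf, hv2]
    have hcvnat : c < v := by exact_mod_cast hcv
    have hfv : (f:ℝ) < v := by
      have : (f:ℝ) ≤ (c:ℝ) := by exact_mod_cast hfc
      linarith
    have hfpos : (0:ℝ) < f := by exact_mod_cast hf1
    have hcpos : (0:ℝ) < c := lt_of_lt_of_le hfpos (by exact_mod_cast hfc)
    have hfmem : f ∈ Finset.Icc 1 (v - 1) := by rw [Finset.mem_Icc]; constructor
                                                · exact hf1
                                                · omega
    have hcmem : c ∈ Finset.Icc 1 (v - 1) := by rw [Finset.mem_Icc]; omega
    -- the g function on naturals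
    set G : ℕ → ℝ := fun k => ((k : ℝ) * a + v - k) ^ 2 / ((k : ℝ) * ((v : ℝ) - k)) with hG
    have key : ∀ j ∈ Finset.Icc 1 (v - 1), G f ≤ G j ∨ G c ≤ G j := by
      intro j hj
      obtain ⟨hj1, hjv, hjpos⟩ := hjlt j hj
      by_cases hjf : j ≤ f
      · left
        have hjf' : (j:ℝ) ≤ (f:ℝ) := by exact_mod_cast hjf
        exact g_decr a (v:ℝ) (j:ℝ) (f:ℝ) ha hjpos hjf' hfv hfs
      · right
        have hcj : c ≤ j := by omega
        have hcj' : (c:ℝ) ≤ (j:ℝ) := by exact_mod_cast hcj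
        exact g_incr a (v:ℝ) (c:ℝ) (j:ℝ) ha hcpos hcj' hjv hsc
    rcases le_total (G f) (G c) with hle | hle
    · refine ⟨f, hfmem, ?_, Or.inl rfl⟩
      intro j hj
      rcases key j hj with h | h
      · exact h
      · exact le_trans hle h
    · refine ⟨c, hcmem, ?_, Or.inr (Or.inl rfl)⟩
      intro j hj
      rcases key j hj with h | h
      · exact le_trans hle h
      · exact h
end
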